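/- Let n ≥ 3 and let Δ be a triangulation of [n]. Let 𝕌_Δ be the subgroup of 𝕋_Δ generated by the elements u_{ij}^k := t_{ki}⁻¹t_{kj} for all i,j,k ∈ [n] with (k,i),(k,j) ∈ Δ. Then 𝕌_Δ is isomorphic to the free group on 2n−4 generators. -/

import Mathlib

open scoped Classical

noncomputable section

namespace NCPolygon

/-- Cyclic successor on `Fin n` (the vertices of the `n`-gon in cyclic order). -/
def csucc {n : ℕ} (i : Fin n) : Fin n :=
  ⟨(i.1 + 1) % n, Nat.mod_lt _ (Nat.lt_of_le_of_lt (Nat.zero_le _) i.isLt)⟩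

/-- Cyclic predecessor on `Fin n`. -/
def cpred {n : ℕ} (i : Fin n) : Fin n :=
  ⟨(i.1 + (n - 1)) % n, Nat.mod_lt _ (Nat.lt_of_le_of_lt (Nat.zero_le _) i.isLt)⟩

/-- A list of elements of `Fin n` is *cyclic* if its entries are distinct and some
cyclic rotation of it is strictly increasing. -/
def IsCyclicSeq {n : ℕ} (l : List (Fin n)) : Prop :=
  l.Nodup ∧ ∃ k : ℕ, (l.rotate k).Pairwise (· < ·)

/-- The pair `(i,k)` crosses `(j,l)` iff `(i,j,k,l)` is cyclic. -/
def Crosses {n : ℕ} (p q : Fin n × Fin n) : Prop :=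
  IsCyclicSeq [p.1, q.1, p.2, q.2]

def NonCrossing {n : ℕ} (Δ : Set (Fin n × Fin n)) : Prop :=
  (∀ p ∈ Δ, p.1 ≠ p.2) ∧ ∀ p ∈ Δ, ∀ q ∈ Δ, ¬ Crosses p q

/-- A triangulation of the `n`-gon: a maximal crossing-free set of (directed) chords. -/
def IsTriangulation {n : ℕ} (Δ : Set (Fin n × Fin n)) : Prop :=
  NonCrossing Δ ∧ ∀ Δ' : Set (Fin n × Fin n), NonCrossing Δ' → Δ ⊆ Δ' → Δ' = Δ

/-! ### The noncommutative polygon algebra `𝒜_n` -/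

abbrev OffD (n : ℕ) := {p : Fin n × Fin n // p.1 ≠ p.2}

abbrev AGen (n : ℕ) := OffD n ⊕ OffD n

def xF {n : ℕ} (i j : Fin n) : FreeAlgebra ℚ (AGen n) :=
  if h : i ≠ j then FreeAlgebra.ι ℚ (Sum.inl ⟨(i, j), h⟩) else 1

def xiF {n : ℕ} (i j : Fin n) : FreeAlgebra ℚ (AGen n) :=
  if h : i ≠ j then FreeAlgebra.ι ℚ (Sum.inr ⟨(i, j), h⟩) else 1

/-- The defining relations of `𝒜_n`: invertibility, triangle, and exchange relations. -/
inductive ARel (n : ℕ) : FreeAlgebra ℚ (AGen n) → FreeAlgebra ℚ (AGen n) → Prop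
  | mul_inv {i j : Fin n} (h : i ≠ j) : ARel n (xF i j * xiF i j) 1
  | inv_mul {i j : Fin n} (h : i ≠ j) : ARel n (xiF i j * xF i j) 1
  | triangle {i j k : Fin n} (hij : i ≠ j) (hik : i ≠ k) (hjk : j ≠ k) :
      ARel n (xF i j * xiF k j * xF k i) (xF i k * xiF j k * xF j i)
  | exchange {i j k l : Fin n} (h : IsCyclicSeq [i, j, k, l]) :
      ARel n (xF j l) (xF j k * xiF i k * xF i l + xF j i * xiF k i * xF k l)

/-- The noncommutative `n`-gon algebra `𝒜_n`. -/
abbrev NCPoly (n : ℕ) := RingQuot (ARel n)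

/-- The generator `x_{ij} ∈ 𝒜_n` (junk value `1` when `i = j`). -/
def X {n : ℕ} (i j : Fin n) : NCPoly n :=
  RingQuot.mkAlgHom ℚ (ARel n) (xF i j)

/-- The generator `x_{ij}⁻¹ ∈ 𝒜_n`. -/
def Xinv {n : ℕ} (i j : Fin n) : NCPoly n :=
  RingQuot.mkAlgHom ℚ (ARel n) (xiF i j)

/-- The noncommutative angle `T_i^{jk} = x_{ji}⁻¹ x_{jk} x_{ik}⁻¹ ∈ 𝒜_n`. -/
def Tang {n : ℕ} (i j k : Fin n) : NCPoly n := Xinv j i * X j k * Xinv i k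

/-! ### Triangle groups -/

def tF {n : ℕ} (Δ : Set (Fin n × Fin n)) (i j : Fin n) : FreeGroup Δ :=
  if h : (i, j) ∈ Δ then FreeGroup.of (⟨(i, j), h⟩ : Δ) else 1

/-- The triangle relations of the triangle group `𝕋_Δ`. -/
def triRels {n : ℕ} (Δ : Set (Fin n × Fin n)) : Set (FreeGroup Δ) :=
  { w | ∃ i j k : Fin n, i ≠ j ∧ i ≠ k ∧ j ≠ k ∧
      (i, j) ∈ Δ ∧ (j, i) ∈ Δ ∧ (i, k) ∈ Δ ∧ (k, i) ∈ Δ ∧ (j, k) ∈ Δ ∧ (k, j) ∈ Δ ∧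
      w = tF Δ i j * (tF Δ k j)⁻¹ * tF Δ k i *
        (tF Δ i k * (tF Δ j k)⁻¹ * tF Δ j i)⁻¹ }

/-- The triangle group `𝕋_Δ` of a triangulation `Δ`. -/
abbrev TriGroup {n : ℕ} (Δ : Set (Fin n × Fin n)) := PresentedGroup (triRels Δ)

/-- The generator `t_{ij} ∈ 𝕋_Δ` (junk value `1` when `(i,j) ∉ Δ`). -/
def tG {n : ℕ} (Δ : Set (Fin n × Fin n)) (i j : Fin n) : TriGroup Δ :=
  if h : (i, j) ∈ Δ then PresentedGroup.of (rels := triRels Δ) ⟨(i, j), h⟩ else 1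

/-! ### The big triangle group `𝕋_n` -/

def btF {n : ℕ} (i j : Fin n) : FreeGroup (OffD n) :=
  if h : i ≠ j then FreeGroup.of (⟨(i, j), h⟩ : OffD n) else 1

def bigRels (n : ℕ) : Set (FreeGroup (OffD n)) :=
  { w | ∃ i j k : Fin n, i ≠ j ∧ i ≠ k ∧ j ≠ k ∧
      w = btF i j * (btF k j)⁻¹ * btF k i * (btF i k * (btF j k)⁻¹ * btF j i)⁻¹ }

/-- The big triangle group `𝕋_n`. -/
abbrev BigTriGroup (n : ℕ) := PresentedGroup (bigRels n)

/-- The generator `t_{ij} ∈ 𝕋_n`. -/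
def bigT {n : ℕ} (i j : Fin n) : BigTriGroup n :=
  if h : i ≠ j then PresentedGroup.of (rels := bigRels n) ⟨(i, j), h⟩ else 1

/-! ### Distinguished subalgebras and subgroups -/

/-- `𝒜_Δ`: the subalgebra of `𝒜_n` generated by all `x_{ij}` together with the
`x_{ij}⁻¹` for `(i,j) ∈ Δ`. -/
def ADelta (n : ℕ) (Δ : Set (Fin n × Fin n)) : Subalgebra ℚ (NCPoly n) :=
  Algebra.adjoin ℚ
    ({a | ∃ i j : Fin n, i ≠ j ∧ a = X i j} ∪ {a | ∃ p ∈ Δ, a = Xinv p.1 p.2})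

/-- `𝒬_n`: the subalgebra of `𝒜_n` generated by the `y_{ij}^k = x_{ki}⁻¹ x_{kj}`. -/
def Qn (n : ℕ) : Subalgebra ℚ (NCPoly n) :=
  Algebra.adjoin ℚ
    {a : NCPoly n | ∃ i j k : Fin n, i ≠ j ∧ i ≠ k ∧ j ≠ k ∧ a = Xinv k i * X k j}

/-- `𝕌_Δ`: the subgroup of `𝕋_Δ` generated by the `u_{ij}^k = t_{ki}⁻¹ t_{kj}`. -/
def UDelta {n : ℕ} (Δ : Set (Fin n × Fin n)) : Subgroup (TriGroup Δ) :=
  Subgroup.closure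
    {g | ∃ i j k : Fin n, (k, i) ∈ Δ ∧ (k, j) ∈ Δ ∧ g = (tG Δ k i)⁻¹ * tG Δ k j}

/-!
Each triangle `a < b < c` of `Δ` contributes two free generators, its angles
`u^a_{bc} = t_{ab}⁻¹ t_{ac}` and `u^b_{ca} = t_{bc}⁻¹ t_{ba}`: the triangle relation says exactly
that the three angles of a triangle multiply to `1`, so the angle at `c` is not needed.
The neighbours of a vertex `k`, in cyclic order from `k⁺`, cut the fan at `k` into triangles of `Δ`,
so `t_{ky} = t_{kk⁺} · (product of the angles at k from k⁺ to y)` and every `u^k_{ij}` is a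
product of angles. Conversely, sending `t_{ky}` to that product of free generators respects the
triangle relations and gives a left inverse of the map from the free group on the angles to `𝕋_Δ`.
A triangle is determined by its middle vertex, which can be any vertex but the first and the last,
so there are `2 (n - 2)` generators.
-/

variable {n : ℕ}

lemma csucc_val (k : Fin n) : (csucc k).1 = if k.1 + 1 = n then 0 else k.1 + 1 := by
  have := k.isLt
  unfold csucc
  split_ifs with h
  · simp [h]
  · exact Nat.mod_eq_of_lt (by omega)

lemma isCyclicSeq_four_iff (a b c d : Fin n) :
    IsCyclicSeq [a, b, c, d] ↔ (a < b ∧ b < c ∧ c < d) ∨ (b < c ∧ c < d ∧ d < a) ∨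
      (c < d ∧ d < a ∧ a < b) ∨ (d < a ∧ a < b ∧ b < c) := by
  have sorted_iff (p q r s : Fin n) :
      [p, q, r, s].Pairwise (· < ·) ↔ p < q ∧ q < r ∧ r < s := by
    simp only [List.pairwise_cons, List.mem_cons, forall_eq_or_imp, List.not_mem_nil,
      List.Pairwise.nil, IsEmpty.forall_iff, implies_true, and_true]
    omega
  have rotations : ∀ k, ∃ m < 4, [a, b, c, d].rotate k = [a, b, c, d].rotate m :=
    fun k => ⟨k % 4, Nat.mod_lt _ (by norm_num), (List.rotate_mod _ _).symm⟩
  constructor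
  · rintro ⟨-, k, hk⟩
    obtain ⟨m, hm, hkm⟩ := rotations k
    rw [hkm] at hk
    interval_cases m
    all_goals have := (sorted_iff _ _ _ _).1 hk; omega
  · intro h
    refine ⟨?_, ?_⟩
    · simp only [List.nodup_cons, List.mem_cons, List.not_mem_nil, List.nodup_nil, or_false,
        not_false_eq_true, and_true]
      omega
    · rcases h with h | h | h | h
      · exact ⟨0, (sorted_iff a b c d).2 h⟩
      · exact ⟨1, (sorted_iff b c d a).2 h⟩
      · exact ⟨2, (sorted_iff c d a b).2 h⟩
      · exact ⟨3, (sorted_iff d a b c).2 h⟩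

lemma IsCyclicSeq.rotate_one {a b c d : Fin n} (h : IsCyclicSeq [a, b, c, d]) :
    IsCyclicSeq [b, c, d, a] := by
  rw [isCyclicSeq_four_iff] at h ⊢
  tauto

/-- The position of `x` in the cyclic order `k⁺, k⁺⁺, …, k⁻, k`, counted from `0`. -/
def offset (k x : Fin n) : ℕ := if k < x then x.1 - k.1 - 1 else x.1 + n - 1 - k.1

lemma offset_injective (k : Fin n) : Function.Injective (offset k) := by
  intro x y h
  unfold offset at h
  split_ifs at h <;> omega

lemma offset_csucc (k : Fin n) : offset k (csucc k) = 0 := by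
  have := k.isLt
  simp only [offset, Fin.lt_def, csucc_val]
  split_ifs <;> omega

lemma offset_lt_offset_iff {k x y : Fin n} (hy : y ≠ k) :
    offset k x < offset k y ↔ (k < x ∧ x < y) ∨ (x < y ∧ y < k) ∨ (y < k ∧ k < x) := by
  unfold offset
  split_ifs <;> omega

lemma offset_lt_offset_of_lt_of_lt {a b c : Fin n} (hab : a < b) (hbc : b < c) :
    offset a b < offset a c ∧ offset b c < offset b a ∧ offset c a < offset c b := by
  refine ⟨(offset_lt_offset_iff ?_).2 ?_, (offset_lt_offset_iff ?_).2 ?_,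
    (offset_lt_offset_iff ?_).2 ?_⟩ <;> omega

lemma isCyclicSeq_of_offset_lt {k p q r : Fin n} (hr : r ≠ k)
    (hpq : offset k p < offset k q) (hqr : offset k q < offset k r) :
    IsCyclicSeq [p, q, r, k] := by
  rw [isCyclicSeq_four_iff]
  unfold offset at hpq hqr
  split_ifs at hpq hqr <;> omega

lemma offset_lt_of_isCyclicSeq {k x y a b : Fin n} (hxy : offset k x < offset k y)
    (h : IsCyclicSeq [x, a, y, b]) :
    (a ≠ k ∧ offset k x < offset k a ∧ offset k a < offset k y) ∧
      (b = k ∨ offset k b < offset k x ∨ offset k y < offset k b) := by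
  rw [isCyclicSeq_four_iff] at h
  unfold offset at hxy ⊢
  split_ifs at hxy ⊢ <;> omega

def IsPrevNeighbor (Δ : Set (Fin n × Fin n)) (k x y : Fin n) : Prop :=
  (k, x) ∈ Δ ∧ offset k x < offset k y ∧
    ∀ m, (k, m) ∈ Δ → offset k m < offset k y → offset k m ≤ offset k x

lemma IsPrevNeighbor.unique {Δ : Set (Fin n × Fin n)} {k x x' y : Fin n}
    (h : IsPrevNeighbor Δ k x y) (h' : IsPrevNeighbor Δ k x' y) : x = x' :=
  offset_injective k (le_antisymm (h'.2.2 x h.1 h.2.1) (h.2.2 x' h'.1 h'.2.1))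

namespace IsTriangulation

variable {Δ : Set (Fin n × Fin n)}

lemma ne_of_mem (hΔ : IsTriangulation Δ) {i j : Fin n} (h : (i, j) ∈ Δ) : i ≠ j :=
  hΔ.1.1 _ h

lemma not_isCyclicSeq (hΔ : IsTriangulation Δ) {x y a b : Fin n} (hxy : (x, y) ∈ Δ)
    (hab : (a, b) ∈ Δ) : ¬IsCyclicSeq [x, a, y, b] :=
  hΔ.1.2 _ hxy _ hab

lemma exists_crosses_of_not_mem (hΔ : IsTriangulation Δ) {i j : Fin n} (hij : i ≠ j)
    (h : (i, j) ∉ Δ) : ∃ q ∈ Δ, Crosses (i, j) q ∨ Crosses q (i, j) := by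
  have crossing : ¬∀ p ∈ insert (i, j) Δ, ∀ q ∈ insert (i, j) Δ, ¬Crosses p q := by
    refine fun hnc => h (hΔ.2 _ ⟨?_, hnc⟩ (Set.subset_insert _ _) ▸ Set.mem_insert _ _)
    rintro p (rfl | hp)
    exacts [hij, hΔ.1.1 p hp]
  push Not at crossing
  obtain ⟨p, hp, q, hq, hc⟩ := crossing
  rcases hp with rfl | hp <;> rcases hq with rfl | hq
  · exact absurd hc.1 (by simp)
  · exact ⟨q, hq, .inl hc⟩
  · exact ⟨p, hp, .inr hc⟩
  · exact absurd hc (hΔ.1.2 p hp q hq)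

lemma mem_symm (hΔ : IsTriangulation Δ) {i j : Fin n} (h : (i, j) ∈ Δ) : (j, i) ∈ Δ := by
  by_contra hji
  obtain ⟨⟨a, b⟩, hab, hc | hc⟩ := hΔ.exists_crosses_of_not_mem (hΔ.ne_of_mem h).symm hji
  · exact hΔ.not_isCyclicSeq hab h hc.rotate_one
  · exact hΔ.not_isCyclicSeq h hab hc.rotate_one.rotate_one.rotate_one

lemma exists_isCyclicSeq_of_not_mem (hΔ : IsTriangulation Δ) {i j : Fin n} (hij : i ≠ j)
    (h : (i, j) ∉ Δ) : ∃ a b, (a, b) ∈ Δ ∧ IsCyclicSeq [i, a, j, b] := by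
  obtain ⟨⟨a, b⟩, hab, hc | hc⟩ := hΔ.exists_crosses_of_not_mem hij h
  · exact ⟨a, b, hab, hc⟩
  · exact ⟨b, a, hΔ.mem_symm hab, hc.rotate_one⟩

lemma mem_csucc (hΔ : IsTriangulation Δ) (hn : 2 ≤ n) (i : Fin n) : (i, csucc i) ∈ Δ := by
  have hsucc := csucc_val i
  by_contra h
  obtain ⟨a, b, -, hc⟩ := hΔ.exists_isCyclicSeq_of_not_mem (by grind) h
  rw [isCyclicSeq_four_iff] at hc
  split_ifs at hsucc <;> omega

lemma isPrevNeighbor_of_mem (hΔ : IsTriangulation Δ) {k x y : Fin n} (hkx : (k, x) ∈ Δ)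
    (hky : (k, y) ∈ Δ) (hxy : (x, y) ∈ Δ) (hlt : offset k x < offset k y) :
    IsPrevNeighbor Δ k x y := by
  refine ⟨hkx, hlt, fun m hkm hmy => ?_⟩
  by_contra hxm
  exact hΔ.not_isCyclicSeq hxy (hΔ.mem_symm hkm)
    (isCyclicSeq_of_offset_lt (hΔ.ne_of_mem hky).symm (not_le.1 hxm) hmy)

lemma mem_of_isPrevNeighbor (hΔ : IsTriangulation Δ) {k x y : Fin n}
    (h : IsPrevNeighbor Δ k x y) (hky : (k, y) ∈ Δ) : (x, y) ∈ Δ := by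
  obtain ⟨hkx, hxy, hmax⟩ := h
  -- a chord crossing `(x, y)` would cross `(k, x)` or `(k, y)`, or end at `k` between `x` and `y`
  by_contra hnot
  obtain ⟨a, b, hab, hc⟩ := hΔ.exists_isCyclicSeq_of_not_mem (fun h => by simp [h] at hxy) hnot
  obtain ⟨⟨hak, hxa, hay⟩, hb⟩ := offset_lt_of_isCyclicSeq hxy hc
  by_cases hbk : b = k
  · subst hbk
    exact absurd (hmax a (hΔ.mem_symm hab) hay) (not_le.2 hxa)
  rcases hb with hbk' | hbx | hyb
  · exact hbk hbk'
  · exact hΔ.not_isCyclicSeq (hΔ.mem_symm hkx) hab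
      (isCyclicSeq_of_offset_lt hak hbx hxa).rotate_one
  · exact hΔ.not_isCyclicSeq hab (hΔ.mem_symm hky) (isCyclicSeq_of_offset_lt hbk hay hyb)

lemma exists_isPrevNeighbor (hΔ : IsTriangulation Δ) {k y : Fin n} (hky : (k, y) ∈ Δ)
    (hy : y ≠ csucc k) : ∃ x, IsPrevNeighbor Δ k x y := by
  have hn : 2 ≤ n := by have := hΔ.ne_of_mem hky; omega
  let before : Finset (Fin n) := {x | (k, x) ∈ Δ ∧ offset k x < offset k y}
  have hsucc : csucc k ∈ before := by
    have : offset k y ≠ 0 := fun h => hy (offset_injective k (h.trans (offset_csucc k).symm))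
    simpa [before, offset_csucc, hΔ.mem_csucc hn, Nat.pos_iff_ne_zero]
  obtain ⟨x, hx, hmax⟩ := before.exists_max_image (offset k) ⟨_, hsucc⟩
  simp only [before, Finset.mem_filter, Finset.mem_univ, true_and] at hx hmax
  exact ⟨x, hx.1, hx.2, fun m hkm hmy => hmax m ⟨hkm, hmy⟩⟩

end IsTriangulation

section Triangles

variable {Δ : Set (Fin n × Fin n)}

def IsTriangle (Δ : Set (Fin n × Fin n)) (a b c : Fin n) : Prop :=
  a < b ∧ b < c ∧ (a, b) ∈ Δ ∧ (a, c) ∈ Δ ∧ (b, c) ∈ Δ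

@[ext]
structure Triangle (Δ : Set (Fin n × Fin n)) where
  a : Fin n
  b : Fin n
  c : Fin n
  isTriangle : IsTriangle Δ a b c

lemma Triangle.mem_Icc_of_mem (hΔ : IsTriangulation Δ) (T : Triangle Δ) {m : Fin n}
    (hm : (T.b, m) ∈ Δ) : T.a ≤ m ∧ m ≤ T.c := by
  obtain ⟨hab, hbc, mab, mac, mbc⟩ := T.isTriangle
  have hca := (offset_lt_offset_of_lt_of_lt hab hbc).2.1
  have hmax := (hΔ.isPrevNeighbor_of_mem mbc (hΔ.mem_symm mab) (hΔ.mem_symm mac) hca).2.2 m hm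
  have hmb := hΔ.ne_of_mem hm
  unfold offset at hca hmax
  constructor <;> by_contra <;> split_ifs at hca hmax <;> omega

lemma Triangle.eq_of_b_eq (hΔ : IsTriangulation Δ) {T T' : Triangle Δ} (h : T.b = T'.b) :
    T = T' := by
  have hT : ∀ m, (T'.b, m) ∈ Δ → T.a ≤ m ∧ m ≤ T.c := fun m hm => T.mem_Icc_of_mem hΔ (h ▸ hm)
  have hT' : ∀ m, (T'.b, m) ∈ Δ → T'.a ≤ m ∧ m ≤ T'.c := fun m hm => T'.mem_Icc_of_mem hΔ hm
  obtain ⟨-, -, mab, -, mbc⟩ := T.isTriangle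
  obtain ⟨-, -, mab', -, mbc'⟩ := T'.isTriangle
  ext1
  · exact le_antisymm (hT _ (hΔ.mem_symm mab')).1 (hT' _ (h ▸ hΔ.mem_symm mab)).1
  · exact h
  · exact le_antisymm (hT' _ (h ▸ mbc)).2 (hT _ mbc').2

lemma exists_triangle_b_eq (hΔ : IsTriangulation Δ) {b : Fin n} (hb₀ : 0 < b.1)
    (hb : b.1 + 1 < n) : ∃ T : Triangle Δ, T.b = b := by
  let p : Fin n := ⟨b.1 - 1, by omega⟩
  have hsucc : (b, csucc b) ∈ Δ := hΔ.mem_csucc (by omega) b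
  have hpred : (b, p) ∈ Δ := by
    have hp : csucc p = b := by ext; simp only [p, csucc_val]; split_ifs <;> omega
    simpa [hp] using hΔ.mem_symm (hΔ.mem_csucc (by omega) p)
  let nbrs : Finset (Fin n) := {m | (b, m) ∈ Δ}
  obtain ⟨c, hc, hcmax⟩ := nbrs.exists_max_image id ⟨csucc b, by simpa [nbrs]⟩
  obtain ⟨a, ha, hamin⟩ := nbrs.exists_min_image id ⟨p, by simpa [nbrs]⟩
  simp only [nbrs, Finset.mem_filter, Finset.mem_univ, true_and, id] at hc ha hcmax hamin
  have hbc : b < c := by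
    have := hcmax _ hsucc
    rw [Fin.le_def, csucc_val] at this
    split_ifs at this <;> omega
  have hab : a < b := by
    have : a.1 ≤ b.1 - 1 := hamin _ hpred
    omega
  have hprev : IsPrevNeighbor Δ b c a := by
    refine ⟨hc, (offset_lt_offset_of_lt_of_lt hab hbc).2.1, fun m hm hma => ?_⟩
    have := hcmax m hm; have := hamin m hm; have := hΔ.ne_of_mem hm
    unfold offset at hma ⊢
    split_ifs at hma ⊢ <;> omega
  have hac := hΔ.mem_symm (hΔ.mem_of_isPrevNeighbor hprev ha)
  exact ⟨⟨a, b, c, hab, hbc, hΔ.mem_symm ha, hac, hc⟩, rfl⟩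

def triangleEquiv (hΔ : IsTriangulation Δ) : Triangle Δ ≃ Fin (n - 2) :=
  Equiv.ofBijective (fun T => ⟨T.b.1 - 1, by obtain ⟨_, _, _⟩ := T.isTriangle; omega⟩) <| by
    refine ⟨fun T T' h => Triangle.eq_of_b_eq hΔ ?_, fun i => ?_⟩
    · obtain ⟨_, _, _⟩ := T.isTriangle
      obtain ⟨_, _, _⟩ := T'.isTriangle
      simp only [Fin.mk.injEq] at h
      omega
    · have := i.isLt
      obtain ⟨T, hT⟩ :=
        exists_triangle_b_eq hΔ (b := ⟨i.1 + 1, by omega⟩) (by simp) (by simp; omega)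
      exact ⟨T, by ext; simp [hT]⟩

end Triangles

section TriangleRel

variable {α G : Type*} [Group G] {f : α → α → G} {i j k : α}

def TriangleRel (f : α → α → G) (i j k : α) : Prop :=
  f i j * (f k j)⁻¹ * f k i = f i k * (f j k)⁻¹ * f j i

lemma TriangleRel.swap (h : TriangleRel f i j k) : TriangleRel f i k j := h.symm

lemma TriangleRel.rotate (h : TriangleRel f i j k) : TriangleRel f j k i := by
  have hki : f k i = f k j * (f i j)⁻¹ * (f i k * (f j k)⁻¹ * f j i) := by rw [← h]; group
  rw [TriangleRel, hki]
  group

lemma TriangleRel.angle_mul_angle_mul_angle (h : TriangleRel f i j k) :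
    (f i j)⁻¹ * f i k * ((f j k)⁻¹ * f j i) * ((f k i)⁻¹ * f k j) = 1 := by
  have hki : f k i = f k j * (f i j)⁻¹ * (f i k * (f j k)⁻¹ * f j i) := by rw [← h]; group
  rw [hki]
  group

end TriangleRel

section Words

variable {Δ : Set (Fin n × Fin n)}

lemma mk_tF {i j : Fin n} (h : (i, j) ∈ Δ) :
    PresentedGroup.mk (triRels Δ) (tF Δ i j) = tG Δ i j := by
  rw [tF, dif_pos h, tG, dif_pos h]
  rfl

lemma lift_tF {G : Type*} [Group G] (f : Δ → G) {i j : Fin n} (h : (i, j) ∈ Δ) :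
    FreeGroup.lift f (tF Δ i j) = f ⟨(i, j), h⟩ := by
  rw [tF, dif_pos h, FreeGroup.lift_apply_of]

lemma IsTriangulation.triangleRel_tG (hΔ : IsTriangulation Δ) {i j k : Fin n} (hij : i ≠ j)
    (hik : i ≠ k) (hjk : j ≠ k) (mij : (i, j) ∈ Δ) (mik : (i, k) ∈ Δ) (mjk : (j, k) ∈ Δ) :
    TriangleRel (tG Δ) i j k := by
  have hrel : tF Δ i j * (tF Δ k j)⁻¹ * tF Δ k i * (tF Δ i k * (tF Δ j k)⁻¹ * tF Δ j i)⁻¹ ∈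
      triRels Δ :=
    ⟨i, j, k, hij, hik, hjk, mij, hΔ.mem_symm mij, mik, hΔ.mem_symm mik, mjk, hΔ.mem_symm mjk,
      rfl⟩
  have h : PresentedGroup.mk (triRels Δ) _ = 1 :=
    (QuotientGroup.eq_one_iff _).2 (Subgroup.subset_normalClosure hrel)
  simp only [map_mul, map_inv, mk_tF mij, mk_tF mik, mk_tF mjk, mk_tF (hΔ.mem_symm mij),
    mk_tF (hΔ.mem_symm mik), mk_tF (hΔ.mem_symm mjk)] at h
  exact mul_inv_eq_one.1 h

def angle (Δ : Set (Fin n × Fin n)) : Triangle Δ × Bool → TriGroup Δ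
  | (T, false) => (tG Δ T.a T.b)⁻¹ * tG Δ T.a T.c
  | (T, true) => (tG Δ T.b T.c)⁻¹ * tG Δ T.b T.a

def angleHom (Δ : Set (Fin n × Fin n)) : FreeGroup (Triangle Δ × Bool) →* TriGroup Δ :=
  FreeGroup.lift (angle Δ)

/-- A word for the angle `u^k_{xy}` of a triangle `k, x, y` listed counterclockwise. -/
def angleWord (Δ : Set (Fin n × Fin n)) (k x y : Fin n) : FreeGroup (Triangle Δ × Bool) :=
  if h : IsTriangle Δ k x y then .of (⟨k, x, y, h⟩, false)
  else if h : IsTriangle Δ y k x then .of (⟨y, k, x, h⟩, true)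
  else if h : IsTriangle Δ x y k then (.of (⟨x, y, k, h⟩, false) * .of (⟨x, y, k, h⟩, true))⁻¹
  else 1

lemma angleWord_abc {a b c : Fin n} (h : IsTriangle Δ a b c) :
    angleWord Δ a b c = .of (⟨a, b, c, h⟩, false) := by
  rw [angleWord, dif_pos h]

lemma angleWord_bca {a b c : Fin n} (h : IsTriangle Δ a b c) :
    angleWord Δ b c a = .of (⟨a, b, c, h⟩, true) := by
  have hac := h.1.trans h.2.1
  rw [angleWord, dif_neg (by rintro ⟨-, hca, -⟩; exact hca.not_gt hac), dif_pos h]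

lemma angleWord_cab {a b c : Fin n} (h : IsTriangle Δ a b c) :
    angleWord Δ c a b = (.of (⟨a, b, c, h⟩, false) * .of (⟨a, b, c, h⟩, true))⁻¹ := by
  have hac := h.1.trans h.2.1
  rw [angleWord, dif_neg (by rintro ⟨hca, -⟩; exact hca.not_gt hac),
    dif_neg (by rintro ⟨-, hca, -⟩; exact hca.not_gt hac), dif_pos h]

lemma IsTriangulation.angleHom_angleWord (hΔ : IsTriangulation Δ) {k x y : Fin n}
    (hkx : (k, x) ∈ Δ) (hky : (k, y) ∈ Δ) (hxy : (x, y) ∈ Δ) (hlt : offset k x < offset k y) :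
    angleHom Δ (angleWord Δ k x y) = (tG Δ k x)⁻¹ * tG Δ k y := by
  rcases (offset_lt_offset_iff (hΔ.ne_of_mem hky).symm).1 hlt with ⟨h₁, h₂⟩ | ⟨h₁, h₂⟩ | ⟨h₁, h₂⟩
  · rw [angleWord_abc ⟨h₁, h₂, hkx, hky, hxy⟩, angleHom, FreeGroup.lift_apply_of]
    rfl
  · have hT : IsTriangle Δ x y k := ⟨h₁, h₂, hxy, hΔ.mem_symm hkx, hΔ.mem_symm hky⟩
    rw [angleWord_cab hT, angleHom, map_inv, map_mul, FreeGroup.lift_apply_of,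
      FreeGroup.lift_apply_of, inv_eq_iff_mul_eq_one]
    exact (hΔ.triangleRel_tG (hΔ.ne_of_mem hxy) (hΔ.ne_of_mem hkx).symm
      (hΔ.ne_of_mem hky).symm hxy hT.2.2.2.1 hT.2.2.2.2).angle_mul_angle_mul_angle
  · rw [angleWord_bca ⟨h₁, h₂, hΔ.mem_symm hky, hΔ.mem_symm hxy, hkx⟩, angleHom,
      FreeGroup.lift_apply_of]
    rfl

end Words

section Fans

variable {Δ : Set (Fin n × Fin n)}

def fanWord (Δ : Set (Fin n × Fin n)) (k y : Fin n) : FreeGroup (Triangle Δ × Bool) :=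
  if h : ∃ x, IsPrevNeighbor Δ k x y then fanWord Δ k h.choose * angleWord Δ k h.choose y
  else 1
termination_by offset k y
decreasing_by exact h.choose_spec.2.1

lemma fanWord_of_isPrevNeighbor {k x y : Fin n} (h : IsPrevNeighbor Δ k x y) :
    fanWord Δ k y = fanWord Δ k x * angleWord Δ k x y := by
  have hex : ∃ x, IsPrevNeighbor Δ k x y := ⟨x, h⟩
  rw [fanWord, dif_pos hex, hex.choose_spec.unique h]

lemma fanWord_csucc (k : Fin n) : fanWord Δ k (csucc k) = 1 := by
  rw [fanWord, dif_neg]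
  rintro ⟨x, -, hx, -⟩
  simp [offset_csucc] at hx

namespace IsTriangulation

lemma fanWord_eq_mul (hΔ : IsTriangulation Δ) {k x y : Fin n} (hkx : (k, x) ∈ Δ)
    (hky : (k, y) ∈ Δ) (hxy : (x, y) ∈ Δ) (hlt : offset k x < offset k y) :
    fanWord Δ k y = fanWord Δ k x * angleWord Δ k x y :=
  fanWord_of_isPrevNeighbor (hΔ.isPrevNeighbor_of_mem hkx hky hxy hlt)

lemma triangleRel_fanWord_of_isTriangle (hΔ : IsTriangulation Δ) {a b c : Fin n}
    (h : IsTriangle Δ a b c) : TriangleRel (fanWord Δ) a b c := by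
  obtain ⟨hab, hbc, mab, mac, mbc⟩ := id h
  obtain ⟨ha, hb, hc⟩ := offset_lt_offset_of_lt_of_lt hab hbc
  rw [TriangleRel, hΔ.fanWord_eq_mul mab mac mbc ha,
    hΔ.fanWord_eq_mul mbc (hΔ.mem_symm mab) (hΔ.mem_symm mac) hb,
    hΔ.fanWord_eq_mul (hΔ.mem_symm mac) (hΔ.mem_symm mbc) mab hc,
    angleWord_abc h, angleWord_bca h, angleWord_cab h]
  group

lemma triangleRel_fanWord (hΔ : IsTriangulation Δ) {i j k : Fin n} (hij : i ≠ j) (hik : i ≠ k)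
    (hjk : j ≠ k) (mij : (i, j) ∈ Δ) (mik : (i, k) ∈ Δ) (mjk : (j, k) ∈ Δ) :
    TriangleRel (fanWord Δ) i j k := by
  have sorted {a b c : Fin n} (hab : a < b) (hbc : b < c) (mab : (a, b) ∈ Δ) (mac : (a, c) ∈ Δ)
      (mbc : (b, c) ∈ Δ) : TriangleRel (fanWord Δ) a b c :=
    hΔ.triangleRel_fanWord_of_isTriangle ⟨hab, hbc, mab, mac, mbc⟩
  have mji := hΔ.mem_symm mij
  have mki := hΔ.mem_symm mik
  have mkj := hΔ.mem_symm mjk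
  rcases hij.lt_or_gt with hij | hji <;> rcases hik.lt_or_gt with hik | hki <;>
    rcases hjk.lt_or_gt with hjk | hkj
  · exact sorted hij hjk mij mik mjk
  · exact (sorted hik hkj mik mij mkj).swap
  · exact absurd (hij.trans hjk) hki.not_gt
  · exact (sorted hki hij mki mkj mij).rotate
  · exact (sorted hji hik mji mjk mik).rotate.swap
  · exact absurd (hkj.trans hji) hik.not_gt
  · exact (sorted hjk hki mjk mji mki).rotate.rotate
  · exact (sorted hkj hji mkj mki mji).swap.rotate

def fanHom (hΔ : IsTriangulation Δ) : TriGroup Δ →* FreeGroup (Triangle Δ × Bool) :=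
  PresentedGroup.toGroup (f := fun p : Δ => fanWord Δ p.1.1 p.1.2) <| by
    rintro _ ⟨i, j, k, hij, hik, hjk, mij, mji, mik, mki, mjk, mkj, rfl⟩
    simp only [map_mul, map_inv, lift_tF _ mij, lift_tF _ mji, lift_tF _ mik, lift_tF _ mki,
      lift_tF _ mjk, lift_tF _ mkj]
    exact mul_inv_eq_one.2 (hΔ.triangleRel_fanWord hij hik hjk mij mik mjk)

lemma fanHom_tG (hΔ : IsTriangulation Δ) {i j : Fin n} (h : (i, j) ∈ Δ) :
    hΔ.fanHom (tG Δ i j) = fanWord Δ i j := by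
  rw [tG, dif_pos h, fanHom, PresentedGroup.toGroup.of]

lemma fanHom_comp_angleHom (hΔ : IsTriangulation Δ) :
    hΔ.fanHom.comp (angleHom Δ) = MonoidHom.id _ := by
  ext ⟨⟨a, b, c, hab, hbc, mab, mac, mbc⟩, _ | _⟩ <;>
    simp only [MonoidHom.comp_apply, angleHom, FreeGroup.lift_apply_of, angle, map_mul, map_inv,
      MonoidHom.id_apply]
  · obtain ⟨ha, -, -⟩ := offset_lt_offset_of_lt_of_lt hab hbc
    rw [hΔ.fanHom_tG mab, hΔ.fanHom_tG mac, hΔ.fanWord_eq_mul mab mac mbc ha,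
      angleWord_abc ⟨hab, hbc, mab, mac, mbc⟩, inv_mul_cancel_left]
  · obtain ⟨-, hb, -⟩ := offset_lt_offset_of_lt_of_lt hab hbc
    rw [hΔ.fanHom_tG mbc, hΔ.fanHom_tG (hΔ.mem_symm mab),
      hΔ.fanWord_eq_mul mbc (hΔ.mem_symm mab) (hΔ.mem_symm mac) hb,
      angleWord_bca ⟨hab, hbc, mab, mac, mbc⟩, inv_mul_cancel_left]

lemma angleHom_injective (hΔ : IsTriangulation Δ) : Function.Injective (angleHom Δ) :=
  Function.LeftInverse.injective (g := hΔ.fanHom) (DFunLike.congr_fun hΔ.fanHom_comp_angleHom)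

lemma tG_eq_mul_angleHom_fanWord (hΔ : IsTriangulation Δ) {k j : Fin n} (hkj : (k, j) ∈ Δ) :
    tG Δ k j = tG Δ k (csucc k) * angleHom Δ (fanWord Δ k j) := by
  induction h : offset k j using Nat.strong_induction_on generalizing j with
  | _ m ih =>
  by_cases hj : j = csucc k
  · rw [hj, fanWord_csucc, map_one, mul_one]
  obtain ⟨x, hx⟩ := hΔ.exists_isPrevNeighbor hkj hj
  rw [fanWord_of_isPrevNeighbor hx, map_mul, ← mul_assoc, ← ih _ (h ▸ hx.2.1) hx.1 rfl,
    hΔ.angleHom_angleWord hx.1 hkj (hΔ.mem_of_isPrevNeighbor hx hkj) hx.2.1, mul_inv_cancel_left]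

lemma range_angleHom (hΔ : IsTriangulation Δ) : (angleHom Δ).range = UDelta Δ := by
  refine le_antisymm (FreeGroup.range_lift_le ?_) ((Subgroup.closure_le _).2 ?_)
  · rintro _ ⟨⟨⟨a, b, c, hab, hbc, mab, mac, mbc⟩, _ | _⟩, rfl⟩
    exacts [Subgroup.subset_closure ⟨b, c, a, mab, mac, rfl⟩,
      Subgroup.subset_closure ⟨c, a, b, mbc, hΔ.mem_symm mab, rfl⟩]
  · rintro _ ⟨i, j, k, hki, hkj, rfl⟩
    refine ⟨(fanWord Δ k i)⁻¹ * fanWord Δ k j, ?_⟩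
    rw [map_mul, map_inv, hΔ.tG_eq_mul_angleHom_fanWord hki, hΔ.tG_eq_mul_angleHom_fanWord hkj]
    group

end IsTriangulation

end Fans

theorem UDelta_free_general (n : ℕ) (Δ : Set (Fin n × Fin n)) (hΔ : IsTriangulation Δ) :
    Nonempty (UDelta Δ ≃* FreeGroup (Fin (2 * n - 4))) := by
  have generators : Triangle Δ × Bool ≃ Fin (2 * n - 4) :=
    ((triangleEquiv hΔ).prodCongr finTwoEquiv.symm).trans
      (finProdFinEquiv.trans (finCongr (by omega)))
  exact ⟨((MonoidHom.ofInjective hΔ.angleHom_injective).trans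
    (MulEquiv.subgroupCongr hΔ.range_angleHom)).symm.trans (FreeGroup.freeGroupCongr generators)⟩

/-- For `n ≥ 3` and a triangulation `Δ` of `[n]`, the subgroup `𝕌_Δ`
of `𝕋_Δ` is isomorphic to the free group on `2n - 4` generators. -/
theorem UDelta_free (n : ℕ) (hn : 3 ≤ n) (Δ : Set (Fin n × Fin n))
    (hΔ : IsTriangulation Δ) :
    Nonempty (UDelta Δ ≃* FreeGroup (Fin (2 * n - 4))) :=
  UDelta_free_general n Δ hΔ

end NCPolygon
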